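/- arXiv:2110.13078 — 4 statements merged into one kernel-verified Lean document; each statement's English description precedes it below -/
import Mathlib

section
/- Let w be a finite nonempty rich word. Then there exist distinct nonempty palindromes w_1, w_2, …, w_p such that w = w_p w_{p−1} ⋯ w_1 and, for each i = 1, 2, …, p, the word w_i is the longest palindromic suffix of w_p w_{p−1} ⋯ w_i. -/
/-- A finite word is a palindrome if it equals its reversal. -/
def IsPalindrome {A : Type*} (w : List A) : Prop := w.reverse = w

/-- A finite word `w` is rich if it contains `|w| + 1` distinct palindromic
factors, including the empty word. -/
def IsRichWord {A : Type*} (w : List A) : Prop :=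
  {u : List A | u <:+: w ∧ IsPalindrome u}.ncard = w.length + 1

/-!
Appending a letter `a` to a word `w` creates at most one new palindromic factor, namely the
longest palindromic suffix `L` of `w a`: any shorter palindromic suffix is also a prefix of `L`,
hence occurs in `w`. So a word of length `n` has at most `n + 1` palindromic factors, and in a
rich word every prefix is rich and every prefix `w a` has a longest palindromic suffix that does
not occur in `w`. Cutting off the longest palindromic suffix of a rich word repeatedly gives the
factorization; its factors are distinct because each one occurs only at the end of the prefix it
terminates.
-/

section

open List

variable {A : Type*}

def palFactors (w : List A) : Set (List A) := {u | u <:+: w ∧ IsPalindrome u}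

theorem isRichWord_iff_ncard_palFactors {w : List A} :
    IsRichWord w ↔ (palFactors w).ncard = w.length + 1 := Iff.rfl

def IsLongestPalSuffix (u w : List A) : Prop :=
  u <:+ w ∧ IsPalindrome u ∧ ∀ v, v <:+ w → IsPalindrome v → v.length ≤ u.length

theorem IsPalindrome.isPrefix_of_isSuffix {u v : List A} (hu : IsPalindrome u)
    (hv : IsPalindrome v) (h : u <:+ v) : u <+: v :=
  reverse_suffix.1 (by rwa [hu, hv])

theorem palFactors_finite (w : List A) : (palFactors w).Finite :=
  w.sublists.finite_toSet.subset fun _ hu => by simpa using hu.1.sublist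

theorem exists_isLongestPalSuffix (w : List A) : ∃ u, IsLongestPalSuffix u w := by
  have hfin : {u : List A | u <:+ w ∧ IsPalindrome u}.Finite :=
    w.tails.finite_toSet.subset fun _ hu => by simpa using hu.1
  obtain ⟨u, hu, hmax⟩ := hfin.exists_maximalFor List.length _ ⟨[], nil_suffix, rfl⟩
  exact ⟨u, hu.1, hu.2, fun v hv hvp => (le_total _ _).elim id (hmax ⟨hv, hvp⟩)⟩

theorem IsLongestPalSuffix.ne_nil {u w : List A} (hu : IsLongestPalSuffix u w) (hw : w ≠ []) :
    u ≠ [] := by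
  have h := hu.2.2 [w.getLast hw] ⟨w.dropLast, dropLast_append_getLast hw⟩ rfl
  rintro rfl
  simp at h

theorem isInfix_of_append_append_eq_concat {s u t w : List A} {a : A}
    (h : s ++ u ++ t = w ++ [a]) (ht : t ≠ []) : u <:+: w :=
  ⟨s, t.dropLast, by rw [← dropLast_append_of_ne_nil ht, h, dropLast_concat]⟩

theorem isInfix_or_eq_of_mem_palFactors_concat {w L u : List A} {a : A}
    (hL : IsLongestPalSuffix L (w ++ [a])) (hu : u ∈ palFactors (w ++ [a])) :
    u <:+: w ∨ u = L := by
  obtain ⟨⟨s, t, hst⟩, hup⟩ := hu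
  rcases eq_or_ne t [] with rfl | ht
  · have husuf : u <:+ w ++ [a] := ⟨s, by simpa using hst⟩
    have hle := hL.2.2 u husuf hup
    have huL : u <:+ L := suffix_of_suffix_length_le husuf hL.1 hle
    rcases hle.eq_or_lt with heq | hlt
    · exact .inr (huL.eq_of_length heq)
    obtain ⟨r, hr⟩ := hup.isPrefix_of_isSuffix hL.2.1 huL
    obtain ⟨x, hx⟩ := hL.1
    refine .inl (isInfix_of_append_append_eq_concat (s := x) (t := r) (a := a) ?_ ?_)
    · rw [append_assoc, hr, hx]
    · rintro rfl
      simp [← hr] at hlt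
  · exact .inl (isInfix_of_append_append_eq_concat hst ht)

theorem palFactors_concat_subset {w L : List A} {a : A} (hL : IsLongestPalSuffix L (w ++ [a])) :
    palFactors (w ++ [a]) ⊆ insert L (palFactors w) := fun u hu =>
  (isInfix_or_eq_of_mem_palFactors_concat hL hu).elim
    (fun h => Set.mem_insert_of_mem _ ⟨h, hu.2⟩) fun h => h ▸ Set.mem_insert u _

theorem ncard_palFactors_concat_le (w : List A) (a : A) :
    (palFactors (w ++ [a])).ncard ≤ (palFactors w).ncard + 1 := by
  obtain ⟨L, hL⟩ := exists_isLongestPalSuffix (w ++ [a])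
  calc (palFactors (w ++ [a])).ncard ≤ (insert L (palFactors w)).ncard :=
        Set.ncard_le_ncard (palFactors_concat_subset hL) ((palFactors_finite w).insert L)
    _ ≤ (palFactors w).ncard + 1 := Set.ncard_insert_le _ _

theorem ncard_palFactors_le (w : List A) : (palFactors w).ncard ≤ w.length + 1 := by
  induction w using reverseRecOn with
  | nil =>
    calc (palFactors ([] : List A)).ncard ≤ ({[]} : Set (List A)).ncard :=
          Set.ncard_le_ncard (fun u hu => by simpa using infix_nil.1 hu.1) (Set.finite_singleton _)
      _ = _ := by simp
  | append_singleton w a ih =>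
    have := ncard_palFactors_concat_le w a
    simp only [length_append, length_singleton]
    omega

theorem IsRichWord.of_concat {w : List A} {a : A} (h : IsRichWord (w ++ [a])) : IsRichWord w := by
  have h₁ := ncard_palFactors_concat_le w a
  have h₂ := ncard_palFactors_le w
  rw [isRichWord_iff_ncard_palFactors, length_append, length_singleton] at h
  rw [isRichWord_iff_ncard_palFactors]
  omega

theorem IsRichWord.of_append {w v : List A} (h : IsRichWord (w ++ v)) : IsRichWord w := by
  induction v using reverseRecOn with
  | nil => simpa using h
  | append_singleton v a ih => exact ih (IsRichWord.of_concat (by simpa using h))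

theorem IsRichWord.not_isInfix_of_isLongestPalSuffix_concat {w L : List A} {a : A}
    (h : IsRichWord (w ++ [a])) (hL : IsLongestPalSuffix L (w ++ [a])) : ¬ L <:+: w := by
  intro hLw
  have hsub : palFactors (w ++ [a]) ⊆ palFactors w := fun u hu =>
    (isInfix_or_eq_of_mem_palFactors_concat hL hu).elim (fun h => ⟨h, hu.2⟩)
      fun h => h ▸ ⟨hLw, hL.2.1⟩
  have h₁ := Set.ncard_le_ncard hsub (palFactors_finite w)
  have h₂ := ncard_palFactors_le w
  rw [isRichWord_iff_ncard_palFactors, length_append, length_singleton] at h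
  omega

theorem IsRichWord.not_isInfix_of_isLongestPalSuffix_append {w L : List A}
    (h : IsRichWord (w ++ L)) (hL : IsLongestPalSuffix L (w ++ L)) (hL₀ : L ≠ []) :
    ¬ L <:+: w := by
  have hw : w ++ L = w ++ L.dropLast ++ [L.getLast hL₀] := by
    rw [append_assoc, dropLast_append_getLast]
  rw [hw] at h hL
  exact fun hLw => h.not_isInfix_of_isLongestPalSuffix_concat hL (hLw.trans (infix_append [] _ _))

/-- The paper's factorization `w = w_p ⋯ w_1` corresponds to `ws = [w_p, …, w_1]`. -/
def IsLpsFactorization (ws : List (List A)) : Prop :=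
  ws.Nodup ∧ (∀ u ∈ ws, u ≠ [] ∧ IsPalindrome u) ∧
    ∀ j (h : j < ws.length), IsLongestPalSuffix ws[j] (ws.take (j + 1)).flatten

theorem IsLpsFactorization.concat {ws : List (List A)} {L : List A} (hws : IsLpsFactorization ws)
    (hL₀ : L ≠ []) (hL : IsLongestPalSuffix L (ws.flatten ++ L)) (hLws : L ∉ ws) :
    IsLpsFactorization (ws ++ [L]) := by
  obtain ⟨hnd, hpal, hlps⟩ := hws
  have hnd' : (ws ++ [L]).Nodup :=
    nodup_append.2 ⟨hnd, nodup_singleton L,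
      by simpa using fun u hu (h : u = L) => hLws (h ▸ hu)⟩
  refine ⟨hnd', ?_, fun j hj => ?_⟩
  · simp only [mem_append, mem_singleton]
    rintro u (hu | rfl)
    exacts [hpal u hu, ⟨hL₀, hL.2.1⟩]
  · rcases (Nat.lt_succ_iff_lt_or_eq.1 (by simpa using hj)) with hj | rfl
    · rw [getElem_append_left hj, take_append_of_le_length (by omega)]
      exact hlps j hj
    · simpa [take_of_length_le] using hL

theorem IsRichWord.exists_isLpsFactorization (w : List A) (h : IsRichWord w) :
    ∃ ws, IsLpsFactorization ws ∧ w = ws.flatten := by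
  rcases eq_or_ne w [] with rfl | hw
  · exact ⟨[], ⟨nodup_nil, by simp, by simp⟩, rfl⟩
  obtain ⟨L, hL⟩ := exists_isLongestPalSuffix w
  have hL₀ := hL.ne_nil hw
  obtain ⟨w', rfl⟩ := hL.1
  have hshorter : w'.length < (w' ++ L).length := by simpa using length_pos_iff.2 hL₀
  obtain ⟨ws, hws, rfl⟩ := exists_isLpsFactorization w' h.of_append
  refine ⟨ws ++ [L], hws.concat hL₀ hL fun hmem => ?_, by simp⟩
  exact h.not_isInfix_of_isLongestPalSuffix_append hL hL₀ (infix_of_mem_flatten hmem)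
termination_by w.length

end

/-- Every finite nonempty rich word `w` can be factorized as
`w = w_p w_{p-1} ⋯ w_1` (here `ws = [w_p, w_{p-1}, …, w_1]`) where the `w_i`
are distinct nonempty palindromes and each `w_i` is the longest palindromic
suffix of `w_p w_{p-1} ⋯ w_i`. -/
theorem statement1 {A : Type*} (w : List A) (hw : w ≠ []) (hrich : IsRichWord w) :
    ∃ ws : List (List A),
      ws ≠ [] ∧ ws.Nodup ∧ (∀ u ∈ ws, u ≠ [] ∧ IsPalindrome u) ∧ w = ws.flatten ∧
        ∀ j (h : j < ws.length),
          ws.get ⟨j, h⟩ <:+ (ws.take (j + 1)).flatten ∧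
            ∀ v : List A, v <:+ (ws.take (j + 1)).flatten → IsPalindrome v →
              v.length ≤ (ws.get ⟨j, h⟩).length := by
  obtain ⟨ws, ⟨hnd, hpal, hlps⟩, rfl⟩ := hrich.exists_isLpsFactorization
  refine ⟨ws, ?_, hnd, hpal, rfl, fun j h => ⟨(hlps j h).1, (hlps j h).2.2⟩⟩
  rintro rfl
  exact hw rfl
end

section
/- Let δ = 3/(2(ln 3 − ln 2)) and let q ≥ 1 be the size of the alphabet. If w is a finite or infinite rich word over this alphabet and n is a positive integer, then the factor complexity of w satisfies F_w(n) ≤ (4q²n)^{δ ln(2n) + 2}. -/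
/-- Factor complexity of a finite word: the number of distinct factors of length `n`. -/
noncomputable def FinFactorComplexity {A : Type*} (w : List A) (n : ℕ) : ℕ :=
  {u : List A | u <:+: w ∧ u.length = n}.ncard

/-- `u` is a (finite) factor of the infinite word `x : ℕ → A`. -/
def IsInfFactor {A : Type*} (x : ℕ → A) (u : List A) : Prop :=
  ∃ i : ℕ, u = (List.range u.length).map fun j => x (i + j)

/-- Factor complexity of an infinite word: the number of distinct factors of length `n`. -/
noncomputable def InfFactorComplexity {A : Type*} (x : ℕ → A) (n : ℕ) : ℕ :=
  {u : List A | IsInfFactor x u ∧ u.length = n}.ncard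

/-- An infinite word is rich if all its finite factors are rich. -/
def IsRichInfWord {A : Type*} (x : ℕ → A) : Prop :=
  ∀ u : List A, IsInfFactor x u → IsRichWord u

/-
Every prefix `w.take e` of a rich word ends with a palindrome occurring nowhere earlier, namely
its longest palindromic suffix, so this palindrome determines `e`. Send a factor `u` to the
longest palindromic suffix `P` of the shortest prefix containing `u`. If `|P| ≤ |u|`, the pair
`(P, |u|)` determines `u`. If `|P| > |u|`, reflecting `u` in `P` produces an earlier occurrence
of `u.reverse`, which then falls under the first case. Hence the number `f n` of factors of
length `1, …, n` is at most `2n` times the number of palindromic factors of those lengths, and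
the latter is at most `2 f ⌈n/2⌉`, a palindrome being determined by its first half and its
parity. Solving `f n ≤ 4n f ⌈n/2⌉`, `f 1 ≤ q` gives `f n ≤ q (4n)^(⌊log₂ n⌋ + 1)`, which is within
the stated bound because `δ ln 2 ≥ 1`. All factors of length `n` of an infinite word lie in one
of its prefixes.
-/

section

open List

variable {A : Type*}

theorem finite_setOf_infix (w : List A) : {u | u <:+: w}.Finite :=
  w.sublists.finite_toSet.subset fun _ hu => List.mem_sublists.2 hu.sublist

theorem palFactors_mono {v w : List A} (h : v <:+: w) : palFactors v ⊆ palFactors w :=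
  fun _ hu => ⟨hu.1.trans h, hu.2⟩

theorem palFactors_nil : palFactors ([] : List A) = {[]} := by
  ext u
  simp only [palFactors, IsPalindrome, infix_nil, Set.mem_ofPred_eq, Set.mem_singleton_iff]
  exact ⟨And.left, fun h => ⟨h, by simp [h]⟩⟩

noncomputable def longestPalSuffix (w : List A) : List A :=
  w.drop (sInf {k | IsPalindrome (w.drop k)})

theorem isPalindrome_longestPalSuffix (w : List A) : IsPalindrome (longestPalSuffix w) :=
  Nat.sInf_mem (s := {k | IsPalindrome (w.drop k)}) ⟨w.length, by simp [IsPalindrome]⟩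

theorem longestPalSuffix_suffix (w : List A) : longestPalSuffix w <:+ w :=
  drop_suffix _ _

theorem longestPalSuffix_mem_palFactors (w : List A) :
    longestPalSuffix w ∈ palFactors w :=
  ⟨(longestPalSuffix_suffix w).isInfix, isPalindrome_longestPalSuffix w⟩

theorem suffix_longestPalSuffix {p w : List A} (hp : p <:+ w)
    (hpal : IsPalindrome p) : p <:+ longestPalSuffix w := by
  obtain ⟨t, rfl⟩ := hp
  have hle : sInf {k | IsPalindrome ((t ++ p).drop k)} ≤ t.length :=
    Nat.sInf_le (by simpa using hpal)
  rw [longestPalSuffix, drop_append_of_le_length hle]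
  exact suffix_append _ _

theorem longestPalSuffix_ne_nil {w : List A} (hw : w ≠ []) : longestPalSuffix w ≠ [] :=
  ne_nil_of_length_pos
    (suffix_longestPalSuffix ⟨w.dropLast, dropLast_append_getLast hw⟩ rfl).length_le

theorem palFactors_append_singleton (v : List A) (a : A) :
    palFactors (v ++ [a]) = insert (longestPalSuffix (v ++ [a])) (palFactors v) := by
  have hsuf := longestPalSuffix_suffix (v ++ [a])
  have hspal := isPalindrome_longestPalSuffix (v ++ [a])
  have hmax := fun p (hp : p <:+ v ++ [a]) => suffix_longestPalSuffix hp
  generalize longestPalSuffix (v ++ [a]) = s at *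
  ext u
  simp only [Set.mem_insert_iff, palFactors, Set.mem_ofPred_eq, infix_concat_iff]
  constructor
  · rintro ⟨hu | hu, hpal⟩
    · by_cases hus : u = s
      · exact Or.inl hus
      have hpre : u <+: s := by
        rw [← reverse_suffix, hpal, hspal]
        exact hmax u hu hpal
      obtain hs | ⟨t, hst, ht⟩ := suffix_concat_iff.1 hsuf
      · exact absurd (by simpa [hs] using hpre) hus
      · rw [hst, prefix_concat_iff] at hpre
        obtain hpre | hpre := hpre
        · exact absurd (hpre.trans hst.symm) hus
        · exact Or.inr ⟨infix_iff_prefix_suffix.2 ⟨t, hpre, ht⟩, hpal⟩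
    · exact Or.inr ⟨hu, hpal⟩
  · rintro (rfl | ⟨hu, hpal⟩)
    · exact ⟨Or.inl hsuf, hspal⟩
    · exact ⟨Or.inr hu, hpal⟩

theorem ncard_palFactors_append_le (v t : List A) :
    (palFactors (v ++ t)).ncard ≤ (palFactors v).ncard + t.length := by
  induction t using List.reverseRecOn with
  | nil => simp
  | append_singleton t a ih =>
    rw [← append_assoc, palFactors_append_singleton, length_append, length_singleton]
    exact (Set.ncard_insert_le _ _).trans (by omega)

theorem IsRichWord.of_append_left {v t : List A} (h : IsRichWord (v ++ t)) : IsRichWord v := by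
  have hle := ncard_palFactors_append_le v t
  have h' : (palFactors (v ++ t)).ncard = v.length + t.length + 1 := length_append ▸ h
  show (palFactors v).ncard = v.length + 1
  exact le_antisymm (ncard_palFactors_le v) (by omega)

theorem IsRichWord.longestPalSuffix_not_mem {v : List A} {a : A} (h : IsRichWord (v ++ [a])) :
    longestPalSuffix (v ++ [a]) ∉ palFactors v := by
  intro hmem
  have := ncard_palFactors_le v
  change (palFactors (v ++ [a])).ncard = _ at h
  rw [palFactors_append_singleton, Set.insert_eq_of_mem hmem, length_append,
    length_singleton] at h
  omega

theorem IsRichWord.longestPalSuffix_take_ne {w : List A} (hw : IsRichWord w) {i j : ℕ}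
    (hij : i < j) (hj : j ≤ w.length) :
    longestPalSuffix (w.take i) ≠ longestPalSuffix (w.take j) := by
  obtain ⟨m, rfl⟩ : ∃ m, j = m + 1 := ⟨j - 1, by omega⟩
  have hm : m < w.length := by omega
  have htake : w.take (m + 1) = w.take m ++ [w[m]] := by
    rw [take_add_one, getElem?_eq_getElem hm]
    rfl
  have hrich : IsRichWord (w.take m ++ [w[m]]) := by
    rw [← htake]
    exact (take_append_drop (m + 1) w ▸ hw).of_append_left
  intro heq
  apply hrich.longestPalSuffix_not_mem
  rw [← htake, ← heq]
  exact palFactors_mono (take_prefix_take_left (by omega)).isInfix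
    (longestPalSuffix_mem_palFactors (w.take i))

theorem IsRichWord.injOn_longestPalSuffix_take {w : List A} (hw : IsRichWord w) :
    Set.InjOn (fun e => longestPalSuffix (w.take e)) (Set.Iic w.length) := by
  intro i hi j hj heq
  rcases lt_trichotomy i j with h | h | h
  exacts [absurd heq (hw.longestPalSuffix_take_ne h hj), h,
    absurd heq.symm (hw.longestPalSuffix_take_ne h hi)]

theorem exists_suffix_take {u w : List A} (h : u <:+: w) : ∃ e ≤ w.length, u <:+ w.take e := by
  obtain ⟨t, hut, htw⟩ := infix_iff_suffix_prefix.1 h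
  exact ⟨t.length, htw.length_le, prefix_iff_eq_take.1 htw ▸ hut⟩

-- `sInf ∅ = 0`, so this is meaningful only when `u` is a factor of `w`.
noncomputable def firstOccEnd (w u : List A) : ℕ := sInf {e | u <:+ w.take e}

theorem suffix_take_firstOccEnd {u w : List A} (h : u <:+: w) :
    u <:+ w.take (firstOccEnd w u) :=
  have ⟨e, _, he⟩ := exists_suffix_take h
  Nat.sInf_mem (s := {e | u <:+ w.take e}) ⟨e, he⟩

theorem firstOccEnd_le {u w : List A} {e : ℕ} (h : u <:+ w.take e) : firstOccEnd w u ≤ e :=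
  Nat.sInf_le h

theorem firstOccEnd_le_length {u w : List A} (h : u <:+: w) : firstOccEnd w u ≤ w.length :=
  have ⟨_, he, hsuf⟩ := exists_suffix_take h
  (firstOccEnd_le hsuf).trans he

noncomputable def firstOccPal (w u : List A) : List A :=
  longestPalSuffix (w.take (firstOccEnd w u))

theorem isPalindrome_firstOccPal (w u : List A) : IsPalindrome (firstOccPal w u) :=
  isPalindrome_longestPalSuffix _

theorem firstOccPal_mem_palFactors (w u : List A) : firstOccPal w u ∈ palFactors w :=
  palFactors_mono (take_prefix _ _).isInfix (longestPalSuffix_mem_palFactors _)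

theorem firstOccPal_ne_nil {u w : List A} (h : u <:+: w) (hu : u ≠ []) :
    firstOccPal w u ≠ [] :=
  longestPalSuffix_ne_nil fun hp => hu (suffix_nil.1 (hp ▸ suffix_take_firstOccEnd h))

theorem IsRichWord.eq_of_firstOccPal_eq {w u v : List A} (hw : IsRichWord w)
    (hu : u <:+: w) (hv : v <:+: w) (h : firstOccPal w u = firstOccPal w v)
    (hlen : u.length = v.length) : u = v := by
  have he : firstOccEnd w u = firstOccEnd w v :=
    hw.injOn_longestPalSuffix_take (firstOccEnd_le_length hu) (firstOccEnd_le_length hv) h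
  rw [suffix_iff_eq_drop.1 (suffix_take_firstOccEnd hu),
    suffix_iff_eq_drop.1 (suffix_take_firstOccEnd hv), he, hlen]

theorem firstOccEnd_reverse_lt {u w : List A} (hu : u <:+: w)
    (hlong : u.length < (firstOccPal w u).length) :
    u.reverse <:+: w ∧ firstOccEnd w u.reverse < firstOccEnd w u := by
  set p := w.take (firstOccEnd w u)
  have hsp : firstOccPal w u <:+ p := longestPalSuffix_suffix p
  have hus : u.reverse <+: firstOccPal w u := by
    rw [← reverse_suffix, reverse_reverse, isPalindrome_firstOccPal]
    exact suffix_of_suffix_length_le (suffix_take_firstOccEnd hu) hsp hlong.le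
  obtain ⟨t, ht⟩ := hsp
  have hpre : t ++ u.reverse <+: w :=
    ((prefix_append_right_inj t).2 hus).trans (ht ▸ take_prefix _ _)
  have hocc : u.reverse <:+ w.take (t.length + u.length) := by
    rw [← length_reverse (as := u), ← length_append, ← prefix_iff_eq_take.1 hpre]
    exact suffix_append _ _
  refine ⟨hocc.isInfix.trans (take_prefix _ _).isInfix, (firstOccEnd_le hocc).trans_lt ?_⟩
  have hp : t.length + (firstOccPal w u).length ≤ firstOccEnd w u := by
    rw [← length_append, ht]
    exact length_take_le _ _
  omega

theorem length_firstOccPal_le_or {u w : List A} (hu : u <:+: w) :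
    (firstOccPal w u).length ≤ u.length ∨
      u.reverse <:+: w ∧ (firstOccPal w u.reverse).length ≤ u.length := by
  by_contra! h
  obtain ⟨hrev, hlt⟩ := firstOccEnd_reverse_lt hu h.1
  have := (firstOccEnd_reverse_lt hrev (by simpa using h.2 hrev)).2
  rw [reverse_reverse] at this
  omega

def factorsUpTo (w : List A) (n : ℕ) : Set (List A) :=
  {u | u <:+: w ∧ 1 ≤ u.length ∧ u.length ≤ n}

def palFactorsUpTo (w : List A) (n : ℕ) : Set (List A) :=
  {u ∈ factorsUpTo w n | IsPalindrome u}

theorem factorsUpTo_finite (w : List A) (n : ℕ) : (factorsUpTo w n).Finite :=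
  (finite_setOf_infix w).subset fun _ hu => hu.1

theorem IsRichWord.ncard_setOf_length_firstOccPal_le {w : List A} (hw : IsRichWord w) (n : ℕ) :
    {u ∈ factorsUpTo w n | (firstOccPal w u).length ≤ u.length}.ncard ≤
      n * (palFactorsUpTo w n).ncard := by
  calc _ ≤ (palFactorsUpTo w n ×ˢ Set.Icc 1 n).ncard := by
        refine Set.ncard_le_ncard_of_injOn (fun u => (firstOccPal w u, u.length)) ?_ ?_ ?_
        · rintro u ⟨⟨hu, h1, hn⟩, hle⟩
          have hpal := firstOccPal_mem_palFactors w u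
          have hne := firstOccPal_ne_nil hu (ne_nil_of_length_pos h1)
          exact ⟨⟨⟨hpal.1, length_pos_of_ne_nil hne, hle.trans hn⟩, hpal.2⟩, h1, hn⟩
        · rintro u ⟨⟨hu, -⟩, -⟩ v ⟨⟨hv, -⟩, -⟩ h
          exact hw.eq_of_firstOccPal_eq hu hv (congrArg Prod.fst h) (congrArg Prod.snd h)
        · exact ((factorsUpTo_finite w n).subset fun _ hu => hu.1).prod (Set.finite_Icc 1 n)
    _ = n * (palFactorsUpTo w n).ncard := by
        rw [Set.ncard_prod, Set.ncard_Icc_nat, Nat.add_sub_cancel, mul_comm]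

theorem IsRichWord.ncard_factorsUpTo_le {w : List A} (hw : IsRichWord w) (n : ℕ) :
    (factorsUpTo w n).ncard ≤ 2 * n * (palFactorsUpTo w n).ncard := by
  set G := {u ∈ factorsUpTo w n | (firstOccPal w u).length ≤ u.length}
  have hG : G.Finite := (factorsUpTo_finite w n).subset fun _ hu => hu.1
  have hsub : factorsUpTo w n ⊆ G ∪ reverse '' G := by
    intro u hu
    obtain h | ⟨hrev, h⟩ := length_firstOccPal_le_or hu.1
    · exact Or.inl ⟨hu, h⟩
    · exact Or.inr ⟨u.reverse, ⟨⟨hrev, by simpa using hu.2⟩, by simpa using h⟩, reverse_reverse u⟩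
  have hGle : G.ncard ≤ n * (palFactorsUpTo w n).ncard := hw.ncard_setOf_length_firstOccPal_le n
  calc (factorsUpTo w n).ncard ≤ (G ∪ reverse '' G).ncard :=
        Set.ncard_le_ncard hsub (hG.union (hG.image _))
    _ ≤ G.ncard + (reverse '' G).ncard := Set.ncard_union_le _ _
    _ ≤ G.ncard + G.ncard := by grw [Set.ncard_image_le hG]
    _ ≤ 2 * n * (palFactorsUpTo w n).ncard := by rw [mul_assoc]; omega

theorem IsPalindrome.eq_take_append_reverse {s : List A} (hs : IsPalindrome s) :
    s = s.take ((s.length + 1) / 2) ++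
      ((s.take ((s.length + 1) / 2)).take (s.length / 2)).reverse := by
  conv_lhs => rw [← take_append_drop ((s.length + 1) / 2) s]
  rw [take_take, ← reverse_reverse (s.drop _), reverse_drop, hs,
    min_eq_left (by omega), show s.length - (s.length + 1) / 2 = s.length / 2 by omega]

theorem IsPalindrome.eq_of_take_eq {s t : List A} (hs : IsPalindrome s) (ht : IsPalindrome t)
    (hlen : s.length = t.length)
    (h : s.take ((s.length + 1) / 2) = t.take ((t.length + 1) / 2)) : s = t := by
  rw [hs.eq_take_append_reverse, ht.eq_take_append_reverse, h, hlen]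

theorem ncard_palFactorsUpTo_le (w : List A) (n : ℕ) :
    (palFactorsUpTo w n).ncard ≤ 2 * (factorsUpTo w ((n + 1) / 2)).ncard := by
  calc _ ≤ (factorsUpTo w ((n + 1) / 2) ×ˢ Set.Iio 2).ncard := by
        refine Set.ncard_le_ncard_of_injOn
          (fun s => (s.take ((s.length + 1) / 2), s.length % 2)) ?_ ?_ ?_
        · rintro s ⟨⟨hs, h1, hn⟩, -⟩
          refine ⟨⟨(take_prefix _ _).isInfix.trans hs, ?_, ?_⟩, Nat.mod_lt _ two_pos⟩ <;>
            rw [length_take] <;> omega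
        · rintro s ⟨-, hs⟩ t ⟨-, ht⟩ h
          simp only [Prod.mk.injEq] at h
          have hlen := congrArg length h.1
          simp only [length_take] at hlen
          exact hs.eq_of_take_eq ht (by omega) h.1
        · exact (factorsUpTo_finite w _).prod (Set.finite_Iio 2)
    _ = 2 * (factorsUpTo w ((n + 1) / 2)).ncard := by
        rw [Set.ncard_prod, Set.ncard_Iio_nat, mul_comm]

theorem ncard_factorsUpTo_one_le [Fintype A] (w : List A) :
    (factorsUpTo w 1).ncard ≤ Fintype.card A := by
  have hsub : factorsUpTo w 1 ⊆ Set.range fun a : A => [a] := by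
    rintro u ⟨-, h1, h2⟩
    obtain ⟨a, rfl⟩ := length_eq_one_iff.1 (le_antisymm h2 h1)
    exact ⟨a, rfl⟩
  calc (factorsUpTo w 1).ncard ≤ (Set.range fun a : A => [a]).ncard :=
        Set.ncard_le_ncard hsub (Set.finite_range _)
    _ = Fintype.card A := by
        rw [Set.ncard_range_of_injective fun _ _ => List.singleton_inj.1, Nat.card_eq_fintype_card]

theorem IsRichWord.ncard_factorsUpTo_le_pow [Fintype A] {w : List A} (hw : IsRichWord w) :
    ∀ k n : ℕ, 1 ≤ n → n ≤ 2 ^ k → (factorsUpTo w n).ncard ≤ Fintype.card A * (4 * n) ^ k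
  | 0, n, h1, h2 => by
      obtain rfl : n = 1 := le_antisymm (by simpa using h2) h1
      simpa using ncard_factorsUpTo_one_le w
  | k + 1, n, h1, h2 => by
      have ih := hw.ncard_factorsUpTo_le_pow k ((n + 1) / 2) (by omega) (by rw [pow_succ] at h2; omega)
      calc (factorsUpTo w n).ncard ≤ 2 * n * (2 * (factorsUpTo w ((n + 1) / 2)).ncard) :=
            (hw.ncard_factorsUpTo_le n).trans (by grw [ncard_palFactorsUpTo_le])
        _ ≤ 2 * n * (2 * (Fintype.card A * (4 * ((n + 1) / 2)) ^ k)) := by grw [ih]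
        _ ≤ 2 * n * (2 * (Fintype.card A * (4 * n) ^ k)) := by gcongr; omega
        _ = Fintype.card A * (4 * n) ^ (k + 1) := by ring

theorem IsRichWord.finFactorComplexity_le [Fintype A] {w : List A} (hw : IsRichWord w) {n : ℕ}
    (hn : 1 ≤ n) : FinFactorComplexity w n ≤ Fintype.card A * (4 * n) ^ (Nat.log 2 n + 1) :=
  calc FinFactorComplexity w n ≤ (factorsUpTo w n).ncard :=
        Set.ncard_le_ncard (fun _ hu => ⟨hu.1, hu.2 ▸ hn, hu.2.le⟩) (factorsUpTo_finite w n)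
    _ ≤ _ := hw.ncard_factorsUpTo_le_pow _ n hn (Nat.lt_pow_succ_log_self one_lt_two n).le

theorem one_le_mul_log_two : 1 ≤ 3 / (2 * (Real.log 3 - Real.log 2)) * Real.log 2 := by
  have h : Real.log (3 ^ 2) ≤ Real.log (2 ^ 5) := Real.log_le_log (by norm_num) (by norm_num)
  rw [Real.log_pow, Real.log_pow] at h
  push_cast at h
  have hpos : 0 < Real.log 3 - Real.log 2 :=
    sub_pos.2 (Real.log_lt_log (by norm_num) (by norm_num))
  rw [div_mul_eq_mul_div, le_div_iff₀ (by positivity)]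
  linarith

theorem natCast_mul_pow_le_rpow {q n k : ℕ} (hn : 1 ≤ n) (hk : 2 ^ k ≤ 2 * n) :
    (q * (4 * n) ^ k : ℝ) ≤
      (4 * q ^ 2 * n) ^ (3 / (2 * (Real.log 3 - Real.log 2)) * Real.log (2 * n) + 2) := by
  set δ := 3 / (2 * (Real.log 3 - Real.log 2))
  rcases Nat.eq_zero_or_pos q with rfl | hq
  · simp only [Nat.cast_zero, zero_mul]
    positivity
  have hq' : (1 : ℝ) ≤ q := by exact_mod_cast hq
  have hn' : (1 : ℝ) ≤ n := by exact_mod_cast hn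
  have hk' : (k : ℝ) ≤ δ * Real.log (2 * n) := by
    have hlog : k * Real.log 2 ≤ Real.log (2 * n) := by
      rw [← Real.log_pow]
      exact Real.log_le_log (by positivity) (by exact_mod_cast hk)
    have hδ : 1 ≤ δ * Real.log 2 := one_le_mul_log_two
    have hδ0 : 0 ≤ δ := div_nonneg (by norm_num)
      (by linarith [Real.log_le_log two_pos (by norm_num : (2 : ℝ) ≤ 3)])
    calc (k : ℝ) = k * 1 := (mul_one _).symm
      _ ≤ k * (δ * Real.log 2) := by gcongr
      _ = δ * (k * Real.log 2) := by ring
      _ ≤ δ * Real.log (2 * n) := by gcongr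
  calc (q * (4 * n) ^ k : ℝ) ≤ (4 * q ^ 2 * n) * (4 * q ^ 2 * n) ^ k := by
        gcongr <;> nlinarith
    _ = (4 * q ^ 2 * n) ^ ((k + 1 : ℕ) : ℝ) := by rw [Real.rpow_natCast]; ring
    _ ≤ _ := by
        gcongr
        · nlinarith
        · push_cast; linarith

theorem isInfFactor_range_map (x : ℕ → A) (N : ℕ) : IsInfFactor x ((range N).map x) :=
  ⟨0, by simp⟩

theorem IsInfFactor.eventually_infix_range_map {x : ℕ → A} {u : List A} (h : IsInfFactor x u) :
    ∀ᶠ N in Filter.atTop, u <:+: (range N).map x := by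
  obtain ⟨i, hi⟩ := h
  filter_upwards [Filter.eventually_ge_atTop (i + u.length)] with N hN
  obtain ⟨m, rfl⟩ := Nat.exists_eq_add_of_le hN
  rw [range_add, range_add, map_append, map_append, map_map]
  nth_rw 1 [hi]
  exact infix_append_of_infix_left infix_append_right

theorem exists_infFactorComplexity_le [Finite A] (x : ℕ → A) (n : ℕ) :
    ∃ N, InfFactorComplexity x n ≤ FinFactorComplexity ((range N).map x) n := by
  have hfin : {u | IsInfFactor x u ∧ u.length = n}.Finite :=
    (List.finite_length_eq A n).subset fun _ hu => hu.2
  obtain ⟨N, hN⟩ := ((Filter.eventually_all_finite hfin).2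
    fun u hu => hu.1.eventually_infix_range_map).exists
  exact ⟨N, Set.ncard_le_ncard (fun u hu => ⟨hN u hu, hu.2⟩)
    ((finite_setOf_infix _).subset fun _ hu => hu.1)⟩

end

theorem statement2_general (A : Type*) [Fintype A]
    (δ : ℝ) (hδ : δ = 3 / (2 * (Real.log 3 - Real.log 2)))
    (n : ℕ) (hn : 1 ≤ n) :
    (∀ w : List A, IsRichWord w →
      (FinFactorComplexity w n : ℝ) ≤
        (4 * (Fintype.card A : ℝ) ^ 2 * n) ^ (δ * Real.log (2 * n) + 2)) ∧
    (∀ x : ℕ → A, IsRichInfWord x →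
      (InfFactorComplexity x n : ℝ) ≤
        (4 * (Fintype.card A : ℝ) ^ 2 * n) ^ (δ * Real.log (2 * n) + 2)) := by
  subst hδ
  have hk : 2 ^ (Nat.log 2 n + 1) ≤ 2 * n := by
    rw [pow_succ, mul_comm]
    exact Nat.mul_le_mul_left 2 (Nat.pow_log_le_self 2 (by omega))
  have hfin : ∀ w : List A, IsRichWord w → (FinFactorComplexity w n : ℝ) ≤
      (4 * (Fintype.card A : ℝ) ^ 2 * n) ^
        (3 / (2 * (Real.log 3 - Real.log 2)) * Real.log (2 * n) + 2) := fun w hw =>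
    calc (FinFactorComplexity w n : ℝ)
        ≤ (Fintype.card A * (4 * n) ^ (Nat.log 2 n + 1) : ℕ) := by
          exact_mod_cast hw.finFactorComplexity_le hn
      _ ≤ _ := by push_cast; exact natCast_mul_pow_le_rpow hn hk
  refine ⟨hfin, fun x hx => ?_⟩
  obtain ⟨N, hN⟩ := exists_infFactorComplexity_le x n
  exact (Nat.cast_le.2 hN).trans (hfin _ (hx _ (isInfFactor_range_map x N)))

/-- Let `δ = 3/(2(ln 3 − ln 2))` and `q ≥ 1` the alphabet size.  Every finite or
infinite rich word `w` over this alphabet satisfies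
`F_w(n) ≤ (4q²n)^{δ ln(2n) + 2}` for every positive integer `n`. -/
theorem statement2 (A : Type*) [Fintype A] (hq : 1 ≤ Fintype.card A)
    (δ : ℝ) (hδ : δ = 3 / (2 * (Real.log 3 - Real.log 2)))
    (n : ℕ) (hn : 1 ≤ n) :
    (∀ w : List A, IsRichWord w →
      (FinFactorComplexity w n : ℝ) ≤
        (4 * (Fintype.card A : ℝ) ^ 2 * n) ^ (δ * Real.log (2 * n) + 2)) ∧
    (∀ x : ℕ → A, IsRichInfWord x →
      (InfFactorComplexity x n : ℝ) ≤
        (4 * (Fintype.card A : ℝ) ^ 2 * n) ^ (δ * Real.log (2 * n) + 2)) :=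
  statement2_general A δ hδ n hn
end

section
/- Let k be a positive integer such that k − k^d ≥ 1. Then ∑_{i=1}^{k} i·⌊c₁ i^{c₂ ln i}⌋ ≥ (k^d − 1)(k − k^d) · c₁ · (k − k^d)^{c₂ ln(k − k^d)} − k(k+1)/2. -/
/-!
On `[1, ∞)` the function `f x = x · c₁ x^{c₂ ln x} = c₁ x e^{c₂ (ln x)²}` is nondecreasing, so each of the
`k + 1 - ⌈m⌉ ≥ k - m = k^d` integers `i ∈ [⌈m⌉, k]`, where `m = k - k^d`, contributes at least `f m` to
`∑ f i`. Replacing `⌊c₁ i^{c₂ ln i}⌋` by `c₁ i^{c₂ ln i}` costs at most `∑ i = k(k+1)/2`.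
-/

open Finset Real

theorem Finset.sum_Icc_one_natCast_eq (k : ℕ) : ∑ i ∈ Icc 1 k, (i : ℝ) = k * (k + 1) / 2 := by
  induction k with
  | zero => simp
  | succ n ih =>
    rw [sum_Icc_succ_top (by omega), ih]
    push_cast
    ring

theorem Finset.sum_mul_sub_sum_le_sum_mul_floor (s : Finset ℕ) (g : ℕ → ℝ) :
    ∑ i ∈ s, (i : ℝ) * g i - ∑ i ∈ s, (i : ℝ) ≤ ∑ i ∈ s, (i : ℝ) * ⌊g i⌋ := by
  rw [← sum_sub_distrib]
  refine sum_le_sum fun i _ => ?_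
  calc (i : ℝ) * g i - i = i * (g i - 1) := by ring
    _ ≤ i * ⌊g i⌋ := by gcongr; exact (Int.sub_one_lt_floor _).le

theorem sub_mul_le_sum_Icc_of_monotoneOn {f : ℝ → ℝ} {m : ℝ} {k : ℕ} (hm : 0 < m)
    (hmk : m ≤ k) (hf : MonotoneOn f (Set.Ici m)) (hf₀ : ∀ x, 0 ≤ x → 0 ≤ f x) :
    ((k : ℝ) - m) * f m ≤ ∑ i ∈ Icc 1 k, f i := by
  set n := ⌈m⌉₊
  have hn : 1 ≤ n := Nat.one_le_ceil_iff.mpr hm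
  have hnk : n ≤ k := Nat.ceil_le.mpr hmk
  have hcard : (k : ℝ) - m ≤ #(Icc n k) := by
    rw [Nat.card_Icc, Nat.cast_sub (by omega)]
    push_cast
    linarith [Nat.ceil_lt_add_one hm.le]
  calc ((k : ℝ) - m) * f m ≤ #(Icc n k) * f m := by gcongr; exact hf₀ m hm.le
    _ ≤ ∑ i ∈ Icc n k, f i := by
      rw [← nsmul_eq_mul]
      refine card_nsmul_le_sum _ _ _ fun i hi => hf (le_refl m) ?_ ?_
      all_goals exact (Nat.le_ceil m).trans (by exact_mod_cast (mem_Icc.mp hi).1)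
    _ ≤ ∑ i ∈ Icc 1 k, f i :=
      sum_le_sum_of_subset_of_nonneg (Icc_subset_Icc hn le_rfl) fun i _ _ => hf₀ i i.cast_nonneg

theorem Real.monotoneOn_rpow_mul_log_self {c : ℝ} (hc : 0 ≤ c) :
    MonotoneOn (fun x : ℝ => x ^ (c * log x)) (Set.Ici 1) := by
  intro x (hx : 1 ≤ x) y _ hxy
  have hx0 : 0 < x := one_pos.trans_le hx
  have hlogx : 0 ≤ log x := log_nonneg hx
  have hlog : log x ≤ log y := log_le_log hx0 hxy
  dsimp only
  rw [rpow_def_of_pos hx0, rpow_def_of_pos (hx0.trans_le hxy), exp_le_exp]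
  nlinarith [mul_le_mul hlog hlog hlogx (hlogx.trans hlog)]

theorem Real.monotoneOn_mul_const_mul_rpow_mul_log_self {a c : ℝ} (ha : 0 ≤ a) (hc : 0 ≤ c) :
    MonotoneOn (fun x : ℝ => x * (a * x ^ (c * log x))) (Set.Ici 1) :=
  fun x (hx : 1 ≤ x) y hy hxy =>
    mul_le_mul hxy (mul_le_mul_of_nonneg_left (monotoneOn_rpow_mul_log_self hc hx hy hxy) ha)
      (by positivity) (zero_le_one.trans (hx.trans hxy))

theorem statement4_general (q : ℕ)
    (δ c₂ d β c₁ : ℝ)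
    (hδ : δ = 3 / (2 * (Real.log 3 - Real.log 2)))
    (hc₂ : c₂ = δ * (Real.log 4 + 2 * Real.log q) + δ + δ * Real.log 2 + 2)
    (hc₁ : c₁ = max
      (Real.exp ((δ * Real.log 2 + 2) * (Real.log 4 + 2 * Real.log q)))
      (Real.exp (-(β + d * β + c₂ * β ^ 2))))
    (k : ℕ) (hkd : 1 ≤ (k : ℝ) - (k : ℝ) ^ d) :
    ((k : ℝ) ^ d - 1) * ((k : ℝ) - (k : ℝ) ^ d) * c₁ *
        ((k : ℝ) - (k : ℝ) ^ d) ^ (c₂ * Real.log ((k : ℝ) - (k : ℝ) ^ d)) -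
      (k : ℝ) * ((k : ℝ) + 1) / 2
    ≤ ∑ i ∈ Finset.Icc 1 k, (i : ℝ) * (⌊c₁ * (i : ℝ) ^ (c₂ * Real.log i)⌋ : ℝ) := by
  have hδ₀ : 0 < δ := by
    rw [hδ]
    have := log_lt_log two_pos (by norm_num : (2 : ℝ) < 3)
    exact div_pos three_pos (by linarith)
  have hc₂₀ : 0 ≤ c₂ := by
    have := log_nonneg (by norm_num : (1 : ℝ) ≤ 2)
    have := log_nonneg (by norm_num : (1 : ℝ) ≤ 4)
    have := log_natCast_nonneg q
    rw [hc₂]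
    positivity
  have hc₁₀ : 0 ≤ c₁ := hc₁ ▸ (exp_pos _).le.trans (le_max_left _ _)
  set f : ℝ → ℝ := fun x => x * (c₁ * x ^ (c₂ * log x))
  set m := (k : ℝ) - (k : ℝ) ^ d with hm
  have hkd₀ : 0 ≤ (k : ℝ) ^ d := rpow_nonneg k.cast_nonneg d
  have hf₀ : ∀ x, 0 ≤ x → 0 ≤ f x := fun x hx => by positivity
  have hsum := sub_mul_le_sum_Icc_of_monotoneOn (f := f) (k := k) (by linarith) (by linarith)
    ((monotoneOn_mul_const_mul_rpow_mul_log_self hc₁₀ hc₂₀).mono (Set.Ici_subset_Ici.mpr hkd))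
    hf₀
  calc ((k : ℝ) ^ d - 1) * m * c₁ * m ^ (c₂ * log m) - k * (k + 1) / 2
      = ((k : ℝ) ^ d - 1) * f m - ∑ i ∈ Icc 1 k, (i : ℝ) := by
        rw [sum_Icc_one_natCast_eq]; ring
    _ ≤ ((k : ℝ) - m) * f m - ∑ i ∈ Icc 1 k, (i : ℝ) := by
        have : (k : ℝ) ^ d - 1 ≤ k - m := by linarith
        gcongr
    _ ≤ ∑ i ∈ Icc 1 k, (i : ℝ) * (c₁ * (i : ℝ) ^ (c₂ * log i)) - ∑ i ∈ Icc 1 k, (i : ℝ) :=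
        sub_le_sub_right hsum _
    _ ≤ _ := sum_mul_sub_sum_le_sum_mul_floor _ _

/-- With the constants `δ, c₂, d, α, β, c₁` of the paper (for alphabet size `q ≥ 1`),
for every positive integer `k` with `k − k^d ≥ 1` we have
`∑_{i=1}^{k} i·⌊c₁ i^{c₂ ln i}⌋ ≥ (k^d − 1)(k − k^d)·c₁·(k − k^d)^{c₂ ln(k − k^d)} − k(k+1)/2`. -/
theorem statement4 (q : ℕ) (hq : 1 ≤ q)
    (δ c₂ d α β c₁ : ℝ)
    (hδ : δ = 3 / (2 * (Real.log 3 - Real.log 2)))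
    (hc₂ : c₂ = δ * (Real.log 4 + 2 * Real.log q) + δ + δ * Real.log 2 + 2)
    (hd0 : 0 < d) (hd1 : d < 1)
    (hα : α = Real.sqrt (1 / c₂))
    (hβ : β = (-1 - d) / (2 * c₂))
    (hc₁ : c₁ = max
      (Real.exp ((δ * Real.log 2 + 2) * (Real.log 4 + 2 * Real.log q)))
      (Real.exp (-(β + d * β + c₂ * β ^ 2))))
    (k : ℕ) (hk : 1 ≤ k) (hkd : 1 ≤ (k : ℝ) - (k : ℝ) ^ d) :
    ((k : ℝ) ^ d - 1) * ((k : ℝ) - (k : ℝ) ^ d) * c₁ *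
        ((k : ℝ) - (k : ℝ) ^ d) ^ (c₂ * Real.log ((k : ℝ) - (k : ℝ) ^ d)) -
      (k : ℝ) * ((k : ℝ) + 1) / 2
    ≤ ∑ i ∈ Finset.Icc 1 k, (i : ℝ) * (⌊c₁ * (i : ℝ) ^ (c₂ * Real.log i)⌋ : ℝ) :=
  statement4_general q δ c₂ d β c₁ hδ hc₂ hc₁ k hkd
end

section
/- Let γ = β + ln c₁ + c₂β² and σ(n) = α√(ln n) + β. Then for every positive integer n, ∑_{i=1}^{⌊e^{σ(n)}⌋} c₁ i^{c₂ ln i} ≤ e^{γ} · n / e^{dα√(ln n)}. -/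
/-!
Every one of the `⌊e^σ⌋` terms has `ln i ≤ σ`, hence is at most `c₁ e^{c₂σ²}`, so the sum is at
most `exp (ln c₁ + σ + c₂σ²)`. Since `c₂α² = 1` and `2c₂β = -1 - d`, expanding `σ = α√(ln n) + β`
turns this exponent into exactly `γ + ln n - dα√(ln n)`.
-/

open Real

lemma rpow_mul_log_le_exp_mul_sq {x s k : ℝ} (hx : 1 ≤ x) (hxs : log x ≤ s) (hk : 0 ≤ k) :
    x ^ (k * log x) ≤ exp (k * s ^ 2) := by
  have hlog : 0 ≤ log x := log_nonneg hx
  have hsq : log x ^ 2 ≤ s ^ 2 := pow_le_pow_left₀ hlog hxs 2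
  rw [rpow_def_of_pos (by linarith), exp_le_exp]
  nlinarith

lemma sum_Icc_floor_exp_le {c k s : ℝ} (hc : 0 < c) (hk : 0 ≤ k) :
    ∑ i ∈ Finset.Icc 1 ⌊exp s⌋₊, c * (i : ℝ) ^ (k * log i) ≤ exp (log c + s + k * s ^ 2) := by
  have hfloor : (⌊exp s⌋₊ : ℝ) ≤ exp s := Nat.floor_le (exp_pos s).le
  have hterm : ∀ i ∈ Finset.Icc 1 ⌊exp s⌋₊,
      c * (i : ℝ) ^ (k * log i) ≤ c * exp (k * s ^ 2) := by
    intro i hi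
    obtain ⟨hi1, him⟩ := Finset.mem_Icc.mp hi
    have hi1' : (1 : ℝ) ≤ i := by exact_mod_cast hi1
    have hlog : log i ≤ s :=
      (log_le_iff_le_exp (by linarith)).mpr ((Nat.cast_le.mpr him).trans hfloor)
    exact mul_le_mul_of_nonneg_left (rpow_mul_log_le_exp_mul_sq hi1' hlog hk) hc.le
  calc ∑ i ∈ Finset.Icc 1 ⌊exp s⌋₊, c * (i : ℝ) ^ (k * log i)
      ≤ (⌊exp s⌋₊ : ℝ) * (c * exp (k * s ^ 2)) := by
        simpa using Finset.sum_le_card_nsmul _ _ _ hterm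
    _ ≤ exp s * (c * exp (k * s ^ 2)) := by gcongr
    _ = exp (log c + s + k * s ^ 2) := by
        rw [exp_add, exp_add, exp_log hc]
        ring

theorem statement8_general (q : ℕ)
    (δ c₂ d α β c₁ γ : ℝ)
    (hδ : δ = 3 / (2 * (Real.log 3 - Real.log 2)))
    (hc₂ : c₂ = δ * (Real.log 4 + 2 * Real.log q) + δ + δ * Real.log 2 + 2)
    (hα : α = Real.sqrt (1 / c₂))
    (hβ : β = (-1 - d) / (2 * c₂))
    (hc₁ : c₁ = max
      (Real.exp ((δ * Real.log 2 + 2) * (Real.log 4 + 2 * Real.log q)))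
      (Real.exp (-(β + d * β + c₂ * β ^ 2))))
    (hγ : γ = β + Real.log c₁ + c₂ * β ^ 2)
    (σ : ℕ → ℝ) (hσ : ∀ n : ℕ, σ n = α * Real.sqrt (Real.log n) + β)
    (n : ℕ) (hn : 1 ≤ n) :
    ∑ i ∈ Finset.Icc 1 ⌊Real.exp (σ n)⌋₊, c₁ * (i : ℝ) ^ (c₂ * Real.log i) ≤
      Real.exp γ * n / Real.exp (d * α * Real.sqrt (Real.log n)) := by
  have hδpos : 0 < δ := by
    rw [hδ]
    exact div_pos three_pos (by linarith [log_lt_log two_pos (by norm_num : (2 : ℝ) < 3)])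
  have hc₂pos : 0 < c₂ := by
    rw [hc₂]
    nlinarith [log_natCast_nonneg q, log_nonneg (by norm_num : (1 : ℝ) ≤ 2),
      log_nonneg (by norm_num : (1 : ℝ) ≤ 4)]
  have hc₁pos : 0 < c₁ := hc₁ ▸ lt_max_of_lt_left (exp_pos _)
  have hα2 : c₂ * α ^ 2 = 1 := by
    rw [hα, sq_sqrt (one_div_pos.mpr hc₂pos).le]
    field_simp
  have hβ2 : 2 * c₂ * β = -1 - d := by
    rw [hβ]
    field_simp
  have hx2 : sqrt (log n) ^ 2 = log n := sq_sqrt (log_natCast_nonneg n)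
  have hn0 : (0 : ℝ) < n := by exact_mod_cast hn
  calc ∑ i ∈ Finset.Icc 1 ⌊exp (σ n)⌋₊, c₁ * (i : ℝ) ^ (c₂ * log i)
      ≤ exp (log c₁ + σ n + c₂ * σ n ^ 2) := sum_Icc_floor_exp_le hc₁pos hc₂pos.le
    _ = exp (γ + log n - d * α * sqrt (log n)) := by
        rw [hσ, hγ]
        congr 1
        linear_combination sqrt (log n) ^ 2 * hα2 + α * sqrt (log n) * hβ2 + hx2
    _ = exp γ * n / exp (d * α * sqrt (log n)) := by
        rw [exp_sub, exp_add, exp_log hn0]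

/-- With the constants `δ, c₂, d, α, β, c₁` of the paper (for alphabet size `q ≥ 1`),
setting `γ = β + ln c₁ + c₂β²` and `σ(n) = α√(ln n) + β`, for every positive
integer `n` we have `∑_{i=1}^{⌊e^{σ(n)}⌋} c₁ i^{c₂ ln i} ≤ e^γ · n / e^{dα√(ln n)}`. -/
theorem statement8 (q : ℕ) (hq : 1 ≤ q)
    (δ c₂ d α β c₁ γ : ℝ)
    (hδ : δ = 3 / (2 * (Real.log 3 - Real.log 2)))
    (hc₂ : c₂ = δ * (Real.log 4 + 2 * Real.log q) + δ + δ * Real.log 2 + 2)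
    (hd0 : 0 < d) (hd1 : d < 1)
    (hα : α = Real.sqrt (1 / c₂))
    (hβ : β = (-1 - d) / (2 * c₂))
    (hc₁ : c₁ = max
      (Real.exp ((δ * Real.log 2 + 2) * (Real.log 4 + 2 * Real.log q)))
      (Real.exp (-(β + d * β + c₂ * β ^ 2))))
    (hγ : γ = β + Real.log c₁ + c₂ * β ^ 2)
    (σ : ℕ → ℝ) (hσ : ∀ n : ℕ, σ n = α * Real.sqrt (Real.log n) + β)
    (n : ℕ) (hn : 1 ≤ n) :
    ∑ i ∈ Finset.Icc 1 ⌊Real.exp (σ n)⌋₊, c₁ * (i : ℝ) ^ (c₂ * Real.log i) ≤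
      Real.exp γ * n / Real.exp (d * α * Real.sqrt (Real.log n)) :=
  statement8_general q δ c₂ d α β c₁ γ hδ hc₂ hα hβ hc₁ hγ σ hσ n hn
end
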